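/- Let X and Y be nonempty finite sets and let μ and ν be normalized capacities on X and Y respectively, with π_*(N) = max(μ(Ñ_X), ν(Ñ_Y)). Then C(π_*) is nonempty if and only if both C(μ) and C(ν) are nonempty. -/

import Mathlib

open Finset MeasureTheory

/-- A capacity on a finite set `Z`: a monotone set function vanishing on `∅`. -/
def IsCapacity {Z : Type*} (γ : Finset Z → ℝ) : Prop :=
  γ ∅ = 0 ∧ ∀ A B : Finset Z, A ⊆ B → γ A ≤ γ B

/-- A normalized capacity: a capacity with `γ(Z) = 1`. -/
def IsNormalizedCapacity {Z : Type*} [Fintype Z] (γ : Finset Z → ℝ) : Prop :=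
  IsCapacity γ ∧ γ Finset.univ = 1

/-- Membership of a capacity `π` on `X × Y` in `Π_Ch(μ, ν)`:
`π` is a capacity whose marginals are `μ` and `ν`. -/
def InPiCh {X Y : Type*} [Fintype X] [Fintype Y]
    (μ : Finset X → ℝ) (ν : Finset Y → ℝ) (π : Finset (X × Y) → ℝ) : Prop :=
  IsCapacity π ∧ (∀ A : Finset X, π (A ×ˢ Finset.univ) = μ A) ∧
    (∀ B : Finset Y, π (Finset.univ ×ˢ B) = ν B)

/-- Projection of `N ⊆ X × Y` onto `X`. -/
def projX {X Y : Type*} [DecidableEq X] (N : Finset (X × Y)) : Finset X :=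
  N.image Prod.fst

/-- Projection of `N ⊆ X × Y` onto `Y`. -/
def projY {X Y : Type*} [DecidableEq Y] (N : Finset (X × Y)) : Finset Y :=
  N.image Prod.snd

/-- Full-fiber projection of `N ⊆ X × Y` onto `X`: points `x` with `(x, y) ∈ N` for all `y`. -/
def tprojX {X Y : Type*} [Fintype X] [Fintype Y] [DecidableEq X] [DecidableEq Y]
    (N : Finset (X × Y)) : Finset X :=
  Finset.univ.filter (fun x => ∀ y : Y, (x, y) ∈ N)

/-- Full-fiber projection of `N ⊆ X × Y` onto `Y`: points `y` with `(x, y) ∈ N` for all `x`. -/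
def tprojY {X Y : Type*} [Fintype X] [Fintype Y] [DecidableEq X] [DecidableEq Y]
    (N : Finset (X × Y)) : Finset Y :=
  Finset.univ.filter (fun y => ∀ x : X, (x, y) ∈ N)

/-- Membership in the core of a capacity `γ`: a weight function `w`, identified with the
additive set function `A ↦ ∑ z ∈ A, w z`, dominating `γ` setwise and agreeing at `Z`. -/
def InCore {Z : Type*} [Fintype Z] (γ : Finset Z → ℝ) (w : Z → ℝ) : Prop :=
  (∀ A : Finset Z, γ A ≤ ∑ z ∈ A, w z) ∧ (∑ z : Z, w z) = γ Finset.univ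

/-! The core of `π_*` contains the product `u ⊗ v` of core elements of `μ` and `ν`, because
`π_*(N)` only sees the full rectangles `Ñ_X × Y` and `X × Ñ_Y` inside `N`, on which `u ⊗ v` has
mass `u(Ñ_X)` and `v(Ñ_Y)`. Conversely `π_*(A × Y) ≥ μ(A)` and `π_*(X × B) ≥ ν(B)`, so the two
marginals of a core element of `π_*` lie in the cores of `μ` and `ν`. -/

theorem IsCapacity.nonneg {Z : Type*} {γ : Finset Z → ℝ} (hγ : IsCapacity γ) (A : Finset Z) :
    0 ≤ γ A :=
  hγ.1 ▸ hγ.2 ∅ A (empty_subset A)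

theorem InCore.nonneg {Z : Type*} [Fintype Z] {γ : Finset Z → ℝ} {w : Z → ℝ}
    (hγ : IsCapacity γ) (hw : InCore γ w) (z : Z) : 0 ≤ w z := by
  simpa using (hγ.nonneg {z}).trans (hw.1 {z})

section Product

variable {X Y : Type*} [Fintype X] [Fintype Y]

theorem InCore.fst_marginal {π : Finset (X × Y) → ℝ} {μ : Finset X → ℝ} {w : X × Y → ℝ}
    (hw : InCore π w) (hle : ∀ A, μ A ≤ π (A ×ˢ univ)) (huniv : π univ = μ univ) :
    InCore μ (fun x => ∑ y, w (x, y)) :=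
  ⟨fun A => (hle A).trans ((hw.1 _).trans_eq (sum_product _ _ _)),
    by rw [← Fintype.sum_prod_type, hw.2, huniv]⟩

theorem InCore.snd_marginal {π : Finset (X × Y) → ℝ} {ν : Finset Y → ℝ} {w : X × Y → ℝ}
    (hw : InCore π w) (hle : ∀ B, ν B ≤ π (univ ×ˢ B)) (huniv : π univ = ν univ) :
    InCore ν (fun y => ∑ x, w (x, y)) :=
  ⟨fun B => (hle B).trans ((hw.1 _).trans_eq (sum_product_right _ _ _)),
    by rw [← Fintype.sum_prod_type_right, hw.2, huniv]⟩

variable [DecidableEq X] [DecidableEq Y]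

theorem tprojX_univ : tprojX (univ : Finset (X × Y)) = univ := by
  ext x; simp [tprojX]

theorem tprojY_univ : tprojY (univ : Finset (X × Y)) = univ := by
  ext y; simp [tprojY]

theorem subset_tprojX_product_univ (A : Finset X) : A ⊆ tprojX (A ×ˢ (univ : Finset Y)) := by
  intro x hx; simp [tprojX, hx]

theorem subset_tprojY_univ_product (B : Finset Y) : B ⊆ tprojY ((univ : Finset X) ×ˢ B) := by
  intro y hy; simp [tprojY, hy]

theorem tprojX_product_univ_subset (N : Finset (X × Y)) : tprojX N ×ˢ univ ⊆ N := by
  rintro ⟨x, y⟩ hp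
  simp only [mem_product, tprojX, mem_filter] at hp
  exact hp.1.2 y

theorem univ_product_tprojY_subset (N : Finset (X × Y)) : univ ×ˢ tprojY N ⊆ N := by
  rintro ⟨x, y⟩ hp
  simp only [mem_product, tprojY, mem_filter] at hp
  exact hp.2.2 x

def piLower (μ : Finset X → ℝ) (ν : Finset Y → ℝ) (N : Finset (X × Y)) : ℝ :=
  max (μ (tprojX N)) (ν (tprojY N))

variable {μ : Finset X → ℝ} {ν : Finset Y → ℝ}

theorem piLower_univ (μ : Finset X → ℝ) (ν : Finset Y → ℝ) :
    piLower μ ν univ = max (μ univ) (ν univ) := by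
  rw [piLower, tprojX_univ, tprojY_univ]

theorem le_piLower_product_univ (hμ : IsCapacity μ) (A : Finset X) :
    μ A ≤ piLower μ ν (A ×ˢ univ) :=
  (hμ.2 _ _ (subset_tprojX_product_univ A)).trans (le_max_left _ _)

theorem le_piLower_univ_product (hν : IsCapacity ν) (B : Finset Y) :
    ν B ≤ piLower μ ν (univ ×ˢ B) :=
  (hν.2 _ _ (subset_tprojY_univ_product B)).trans (le_max_right _ _)

theorem InCore.mul_piLower {u : X → ℝ} {v : Y → ℝ}
    (hμ : IsNormalizedCapacity μ) (hν : IsNormalizedCapacity ν)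
    (hu : InCore μ u) (hv : InCore ν v) :
    InCore (piLower μ ν) (fun p => u p.1 * v p.2) := by
  have hu1 : ∑ x, u x = 1 := hu.2.trans hμ.2
  have hv1 : ∑ y, v y = 1 := hv.2.trans hν.2
  have hmass : ∀ (A : Finset X) (B : Finset Y),
      ∑ p ∈ A ×ˢ B, u p.1 * v p.2 = (∑ x ∈ A, u x) * ∑ y ∈ B, v y := by
    intro A B; rw [sum_mul_sum, sum_product]
  have hmono : ∀ {M N : Finset (X × Y)}, M ⊆ N →
      ∑ p ∈ M, u p.1 * v p.2 ≤ ∑ p ∈ N, u p.1 * v p.2 := fun hMN =>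
    sum_le_sum_of_subset_of_nonneg hMN fun p _ _ =>
      mul_nonneg (hu.nonneg hμ.1 p.1) (hv.nonneg hν.1 p.2)
  refine ⟨fun N => max_le ?_ ?_, ?_⟩
  · calc μ (tprojX N) ≤ ∑ x ∈ tprojX N, u x := hu.1 _
      _ = ∑ p ∈ tprojX N ×ˢ univ, u p.1 * v p.2 := by rw [hmass, hv1, mul_one]
      _ ≤ _ := hmono (tprojX_product_univ_subset N)
  · calc ν (tprojY N) ≤ ∑ y ∈ tprojY N, v y := hv.1 _
      _ = ∑ p ∈ univ ×ˢ tprojY N, u p.1 * v p.2 := by rw [hmass, hu1, one_mul]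
      _ ≤ _ := hmono (univ_product_tprojY_subset N)
  · rw [piLower_univ, hμ.2, hν.2, max_self, ← univ_product_univ, hmass, hu1, hv1, mul_one]

end Product

theorem core_piLower_nonempty_iff_general {X Y : Type*} [Fintype X] [Fintype Y]
    [DecidableEq X] [DecidableEq Y]
    (μ : Finset X → ℝ) (ν : Finset Y → ℝ)
    (hμ : IsNormalizedCapacity μ) (hν : IsNormalizedCapacity ν) :
    (∃ w : X × Y → ℝ,
        InCore (fun N : Finset (X × Y) => max (μ (tprojX N)) (ν (tprojY N))) w) ↔
      ((∃ u : X → ℝ, InCore μ u) ∧ (∃ v : Y → ℝ, InCore ν v)) := by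
  have huniv : piLower μ ν univ = 1 := by rw [piLower_univ, hμ.2, hν.2, max_self]
  constructor
  · rintro ⟨w, hw⟩
    exact ⟨⟨_, hw.fst_marginal (le_piLower_product_univ hμ.1) (huniv.trans hμ.2.symm)⟩,
      ⟨_, hw.snd_marginal (le_piLower_univ_product hν.1) (huniv.trans hν.2.symm)⟩⟩
  · rintro ⟨⟨u, hu⟩, ⟨v, hv⟩⟩
    exact ⟨_, hu.mul_piLower hμ hν hv⟩

/-- `C(π_*)` is nonempty if and only if both `C(μ)` and `C(ν)` are nonempty. -/
theorem core_piLower_nonempty_iff {X Y : Type*} [Fintype X] [Fintype Y]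
    [Nonempty X] [Nonempty Y] [DecidableEq X] [DecidableEq Y]
    (μ : Finset X → ℝ) (ν : Finset Y → ℝ)
    (hμ : IsNormalizedCapacity μ) (hν : IsNormalizedCapacity ν) :
    (∃ w : X × Y → ℝ,
        InCore (fun N : Finset (X × Y) => max (μ (tprojX N)) (ν (tprojY N))) w) ↔
      ((∃ u : X → ℝ, InCore μ u) ∧ (∃ v : Y → ℝ, InCore ν v)) :=
  core_piLower_nonempty_iff_general μ ν hμ hν
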